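/- Let ρ be a density matrix and suppose ρ' = ∑_k p_k U_k ρ U_k† where p_k > 0, ∑p_k = 1, each U_k is unitary, and S(ρ') = S(ρ). Then U_k ρ U_k† = ρ' for every k; in particular ρ' is unitarily equivalent to ρ via a single unitary U_1. -/

import Mathlib

open Matrix ComplexOrder
open scoped Classical

/-- The von Neumann entropy `S(ρ) = -∑ λᵢ log λᵢ` of a Hermitian matrix,
computed from its eigenvalues. -/
noncomputable def vonNeumannEntropy {N : ℕ} (ρ : Matrix (Fin N) (Fin N) ℂ) : ℝ :=
  if h : ρ.IsHermitian then -∑ i, h.eigenvalues i * Real.log (h.eigenvalues i) else 0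

/-!
Write `ρ = Q diag(μ) Q*` and `ρ' = V diag(λ) V*`. In the eigenbasis of `ρ'` the diagonal of
`U_k ρ U_k*` is `x_k = |V* U_k Q|² μ`, the image of `μ` under a doubly stochastic matrix, and
`λ = ∑ p_k x_k`. With `η t = -t log t` strictly concave, Jensen's inequality along the rows of
the doubly stochastic matrices and then along the weights `p` gives
`S(ρ) ≤ ∑_k p_k ∑_i η(x_k i) ≤ ∑_i η(λ_i) = S(ρ')`. Equality in the second step forces
`x_k = λ`, equality in the first forces `V* U_k ρ U_k* V` to be diagonal; together
`U_k ρ U_k* = V diag(λ) V* = ρ'`.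
-/

open Real Unitary

section DoublyStochastic

variable {n : Type*} [Fintype n] [DecidableEq n] {s : Set ℝ} {f : ℝ → ℝ} {M : Matrix n n ℝ}
  {x : n → ℝ}

theorem ConcaveOn.sum_smul_le_map_mulVec (hf : ConcaveOn ℝ s f) (hM : M ∈ doublyStochastic ℝ n)
    (hx : ∀ j, x j ∈ s) (i : n) : ∑ j, M i j • f (x j) ≤ f ((M *ᵥ x) i) := by
  simpa [mulVec, dotProduct] using hf.le_map_sum (fun j _ ↦ nonneg_of_mem_doublyStochastic hM)
    (sum_row_of_mem_doublyStochastic hM i) (fun j _ ↦ hx j)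

theorem Convex.mulVec_mem_of_mem_doublyStochastic (hs : Convex ℝ s)
    (hM : M ∈ doublyStochastic ℝ n) (hx : ∀ j, x j ∈ s) (i : n) : (M *ᵥ x) i ∈ s := by
  simpa [mulVec, dotProduct] using hs.sum_mem (fun j _ ↦ nonneg_of_mem_doublyStochastic hM)
    (sum_row_of_mem_doublyStochastic hM i) (fun j _ ↦ hx j)

theorem sum_sum_smul_eq_sum_of_mem_doublyStochastic (hM : M ∈ doublyStochastic ℝ n)
    (y : n → ℝ) : ∑ i, ∑ j, M i j • y j = ∑ j, y j := by
  rw [Finset.sum_comm]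
  simp only [← Finset.sum_smul, sum_col_of_mem_doublyStochastic hM, one_smul]

theorem ConcaveOn.sum_le_sum_map_mulVec (hf : ConcaveOn ℝ s f) (hM : M ∈ doublyStochastic ℝ n)
    (hx : ∀ j, x j ∈ s) : ∑ j, f (x j) ≤ ∑ i, f ((M *ᵥ x) i) := by
  rw [← sum_sum_smul_eq_sum_of_mem_doublyStochastic hM]
  exact Finset.sum_le_sum fun i _ ↦ hf.sum_smul_le_map_mulVec hM hx i

theorem StrictConcaveOn.eq_mulVec_of_sum_map_mulVec_le (hf : StrictConcaveOn ℝ s f)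
    (hM : M ∈ doublyStochastic ℝ n) (hx : ∀ j, x j ∈ s)
    (h : ∑ i, f ((M *ᵥ x) i) ≤ ∑ j, f (x j)) {i j : n} (hij : M i j ≠ 0) :
    x j = (M *ᵥ x) i := by
  have hrow : ∑ j, M i j • f (x j) = f ((M *ᵥ x) i) := by
    refine (Finset.sum_eq_sum_iff_of_le fun i _ ↦ hf.concaveOn.sum_smul_le_map_mulVec hM hx i).1
      ?_ i (Finset.mem_univ i)
    rw [sum_sum_smul_eq_sum_of_mem_doublyStochastic hM]
    exact le_antisymm (hf.concaveOn.sum_le_sum_map_mulVec hM hx) h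
  have := (hf.map_sum_eq_iff' (fun j _ ↦ nonneg_of_mem_doublyStochastic hM)
    (sum_row_of_mem_doublyStochastic hM i) (fun j _ ↦ hx j)).1 ?_ j (Finset.mem_univ j) hij
  · simpa [mulVec, dotProduct] using this
  · simpa [mulVec, dotProduct] using hrow.symm

end DoublyStochastic

theorem StrictConcaveOn.eq_sum_smul_of_sum_map_sum_smul_le {ι n : Type*} [Fintype ι] [Fintype n]
    {s : Set ℝ} {f : ℝ → ℝ} (hf : StrictConcaveOn ℝ s f) {p : ι → ℝ} (hp : ∀ k, 0 < p k)
    (hp1 : ∑ k, p k = 1) {x : ι → n → ℝ} (hx : ∀ k i, x k i ∈ s) {a : ℝ}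
    (hle : ∀ k, a ≤ ∑ i, f (x k i)) (hge : ∑ i, f ((∑ k, p k • x k) i) ≤ a) :
    (∀ k, ∑ i, f (x k i) = a) ∧ ∀ k, x k = ∑ l, p l • x l := by
  have hjensen : ∀ i, ∑ k, p k • f (x k i) ≤ f ((∑ k, p k • x k) i) := fun i ↦ by
    simpa using hf.concaveOn.le_map_sum (fun k _ ↦ (hp k).le) hp1 (fun k _ ↦ hx k i)
  have hswap : ∑ i, ∑ k, p k • f (x k i) = ∑ k, p k • ∑ i, f (x k i) := by
    rw [Finset.sum_comm]
    simp only [Finset.smul_sum]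
  have hmean : ∑ k, p k • a = a := by rw [← Finset.sum_smul, hp1, one_smul]
  have hlow : ∑ k, p k • a ≤ ∑ k, p k • ∑ i, f (x k i) :=
    Finset.sum_le_sum fun k _ ↦ smul_le_smul_of_nonneg_left (hle k) (hp k).le
  have hup : ∑ i, ∑ k, p k • f (x k i) ≤ a :=
    (Finset.sum_le_sum fun i _ ↦ hjensen i).trans hge
  refine ⟨fun k ↦ ?_, fun k ↦ funext fun i ↦ ?_⟩
  · have := (Finset.sum_eq_sum_iff_of_le fun k _ ↦
      smul_le_smul_of_nonneg_left (hle k) (hp k).le).1 (by linarith) k (Finset.mem_univ k)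
    exact (smul_right_injective ℝ (hp k).ne' this).symm
  · have hrow := (Finset.sum_eq_sum_iff_of_le fun i _ ↦ hjensen i).1
      (le_antisymm (Finset.sum_le_sum fun i _ ↦ hjensen i) (by linarith)) i (Finset.mem_univ i)
    have := (hf.map_sum_eq_iff (fun k _ ↦ hp k) hp1 (fun k _ ↦ hx k i)).1
      (by simpa using hrow.symm) k (Finset.mem_univ k)
    simpa using this

namespace Matrix

variable {n 𝕜 : Type*} [Fintype n] [DecidableEq n] [RCLike 𝕜]

theorem map_norm_sq_mem_doublyStochastic_of_mem_unitaryGroup {W : Matrix n n 𝕜}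
    (hW : W ∈ unitaryGroup n 𝕜) : W.map (‖·‖ ^ 2) ∈ doublyStochastic ℝ n := by
  rw [mem_doublyStochastic_iff_sum]
  refine ⟨fun i j ↦ by simp only [map_apply]; positivity, fun i ↦ ?_, fun j ↦ ?_⟩
  · have := congr_fun₂ (mem_unitaryGroup_iff.1 hW) i i
    simp only [mul_apply, star_apply, RCLike.star_def, RCLike.mul_conj, one_apply_eq] at this
    exact_mod_cast this
  · have := congr_fun₂ (mem_unitaryGroup_iff'.1 hW) j j
    simp only [mul_apply, star_apply, RCLike.star_def, RCLike.conj_mul, one_apply_eq] at this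
    exact_mod_cast this

theorem mul_diagonal_mul_conjTranspose_apply_self (W : Matrix n n 𝕜) (μ : n → ℝ) (i : n) :
    (W * diagonal (RCLike.ofReal ∘ μ : n → 𝕜) * Wᴴ) i i = ((W.map (‖·‖ ^ 2) *ᵥ μ) i : 𝕜) := by
  simp only [mul_apply, diagonal_apply, conjTranspose_apply, RCLike.star_def, mulVec, dotProduct]
  push_cast
  refine Finset.sum_congr rfl fun j _ ↦ ?_
  simp [mul_right_comm _ _ ((starRingEnd 𝕜) (W i j)), RCLike.mul_conj, mul_comm]

theorem eq_sum_smul_mulVec_of_diagonal_eq_sum_smul {ι : Type*} [Fintype ι] {p : ι → ℝ}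
    {W : ι → Matrix n n 𝕜} {d μ : n → ℝ}
    (h : diagonal (RCLike.ofReal ∘ d : n → 𝕜) =
      ∑ k, p k • (W k * diagonal (RCLike.ofReal ∘ μ) * (W k)ᴴ)) :
    d = ∑ k, p k • (W k).map (‖·‖ ^ 2) *ᵥ μ := by
  funext i
  have hi := congr_fun₂ h i i
  simp only [diagonal_apply_eq, Function.comp_apply, Matrix.sum_apply, Matrix.smul_apply,
    mul_diagonal_mul_conjTranspose_apply_self] at hi
  simp only [Finset.sum_apply, Pi.smul_apply, smul_eq_mul]
  exact_mod_cast hi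

theorem mul_diagonal_mul_conjTranspose_eq_diagonal {α : Type*} [CommRing α] [StarRing α]
    {W : Matrix n n α} (hW : W ∈ unitaryGroup n α) {μ d : n → α}
    (h : ∀ i j, W i j ≠ 0 → μ j = d i) : W * diagonal μ * Wᴴ = diagonal d := by
  have hcomm : W * diagonal μ = diagonal d * W := by
    ext i j
    rw [mul_diagonal, diagonal_mul]
    by_cases hij : W i j = 0
    · simp [hij]
    · rw [h i j hij, mul_comm]
  rw [hcomm, Matrix.mul_assoc, ← star_eq_conjTranspose, mem_unitaryGroup_iff.1 hW, Matrix.mul_one]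

theorem mul_diagonal_mul_conjTranspose_eq_diagonal_of_sum_negMulLog_le {W : Matrix n n 𝕜}
    (hW : W ∈ unitaryGroup n 𝕜) {μ : n → ℝ} (hμ : ∀ j, 0 ≤ μ j)
    (h : ∑ i, negMulLog ((W.map (‖·‖ ^ 2) *ᵥ μ) i) ≤ ∑ j, negMulLog (μ j)) :
    W * diagonal (RCLike.ofReal ∘ μ : n → 𝕜) * Wᴴ =
      diagonal (RCLike.ofReal ∘ (W.map (‖·‖ ^ 2) *ᵥ μ)) :=
  mul_diagonal_mul_conjTranspose_eq_diagonal hW fun i j hij ↦ congr_arg _ <|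
    strictConcaveOn_negMulLog.eq_mulVec_of_sum_map_mulVec_le
      (map_norm_sq_mem_doublyStochastic_of_mem_unitaryGroup hW) hμ h (by simpa using hij)

theorem IsHermitian.conjStarAlgAut_eq {A : Matrix n n 𝕜} (hA : A.IsHermitian)
    (u : unitaryGroup n 𝕜) :
    conjStarAlgAut 𝕜 _ u A =
      (↑(u * hA.eigenvectorUnitary) : Matrix n n 𝕜) * diagonal (RCLike.ofReal ∘ hA.eigenvalues) *
        (↑(u * hA.eigenvectorUnitary) : Matrix n n 𝕜)ᴴ := by
  conv_lhs => rw [hA.spectral_theorem]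
  rw [← conjStarAlgAut_mul_apply, conjStarAlgAut_apply]
  rfl

end Matrix

theorem vonNeumannEntropy_eq_sum_negMulLog {N : ℕ} {A : Matrix (Fin N) (Fin N) ℂ}
    (hA : A.IsHermitian) : vonNeumannEntropy A = ∑ i, negMulLog (hA.eigenvalues i) := by
  simp [vonNeumannEntropy, hA, negMulLog]

theorem mixture_of_unitaries_entropy_eq_general {N s : ℕ} (hs : 0 < s)
    (ρ ρ' : Matrix (Fin N) (Fin N) ℂ)
    (hρ : ρ.PosSemidef)
    (p : Fin s → ℝ) (hp : ∀ k, 0 < p k) (hp1 : ∑ k, p k = 1)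
    (U : Fin s → Matrix (Fin N) (Fin N) ℂ)
    (hU : ∀ k, U k ∈ Matrix.unitaryGroup (Fin N) ℂ)
    (hmix : ρ' = ∑ k, p k • (U k * ρ * (U k)ᴴ))
    (hS : vonNeumannEntropy ρ' = vonNeumannEntropy ρ) :
    (∀ k, U k * ρ * (U k)ᴴ = ρ') ∧
      ρ' = U ⟨0, hs⟩ * ρ * (U ⟨0, hs⟩)ᴴ := by
  have hρ' : ρ'.IsHermitian := hmix ▸ isSelfAdjoint_sum _ fun k _ ↦
    (isHermitian_mul_mul_conjTranspose (U k) hρ.1).smul (IsSelfAdjoint.all (p k))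
  set V := hρ'.eigenvectorUnitary
  set W : Fin s → Matrix (Fin N) (Fin N) ℂ := fun k ↦
    ↑(star V * ⟨U k, hU k⟩ * hρ.1.eigenvectorUnitary : unitaryGroup (Fin N) ℂ)
  have hW (k : Fin s) : W k ∈ unitaryGroup (Fin N) ℂ := Subtype.prop _
  set D : Matrix (Fin N) (Fin N) ℂ := diagonal (RCLike.ofReal ∘ hρ.1.eigenvalues)
  set x : Fin s → Fin N → ℝ := fun k ↦ (W k).map (‖·‖ ^ 2) *ᵥ hρ.1.eigenvalues
  have hconj (k : Fin s) : conjStarAlgAut ℂ _ (star V) (U k * ρ * (U k)ᴴ) = W k * D * (W k)ᴴ := by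
    rw [show U k * ρ * (U k)ᴴ = conjStarAlgAut ℂ _ ⟨U k, hU k⟩ ρ from rfl,
      ← conjStarAlgAut_mul_apply, hρ.1.conjStarAlgAut_eq]
  have hmixV : conjStarAlgAut ℂ _ (star V) ρ' = ∑ k, p k • (W k * D * (W k)ᴴ) := by
    rw [hmix, map_sum]
    refine Finset.sum_congr rfl fun k _ ↦ ?_
    rw [← hconj, conjStarAlgAut_apply, conjStarAlgAut_apply, Matrix.mul_smul, Matrix.smul_mul]
  have hlam : hρ'.eigenvalues = ∑ k, p k • x k := eq_sum_smul_mulVec_of_diagonal_eq_sum_smul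
    (hρ'.conjStarAlgAut_star_eigenvectorUnitary.symm.trans hmixV)
  have hstoch (k : Fin s) := map_norm_sq_mem_doublyStochastic_of_mem_unitaryGroup (hW k)
  obtain ⟨hent, hx⟩ := strictConcaveOn_negMulLog.eq_sum_smul_of_sum_map_sum_smul_le hp hp1
    (fun k ↦ (convex_Ici 0).mulVec_mem_of_mem_doublyStochastic (hstoch k) hρ.eigenvalues_nonneg)
    (fun k ↦ concaveOn_negMulLog.sum_le_sum_map_mulVec (hstoch k) hρ.eigenvalues_nonneg)
    (by rw [← hlam, ← vonNeumannEntropy_eq_sum_negMulLog hρ', hS,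
      vonNeumannEntropy_eq_sum_negMulLog hρ.1])
  have hσ (k : Fin s) : U k * ρ * (U k)ᴴ = ρ' :=
    EquivLike.injective (conjStarAlgAut ℂ _ (star V)) <| by
      rw [hconj, mul_diagonal_mul_conjTranspose_eq_diagonal_of_sum_negMulLog_le (hW k)
        hρ.eigenvalues_nonneg (hent k).le, hx k, ← hlam, hρ'.conjStarAlgAut_star_eigenvectorUnitary]
  exact ⟨hσ, (hσ _).symm⟩

/-- If `ρ' = ∑ k, p k • U k ρ U kᴴ` is a mixture of unitary conjugates of `ρ`
(`p k > 0`, `∑ p = 1`) with `S(ρ') = S(ρ)`, then `U k ρ U kᴴ = ρ'` for every `k`;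
in particular `ρ'` is unitarily equivalent to `ρ` via the single unitary `U 1`. -/
theorem mixture_of_unitaries_entropy_eq {N s : ℕ} (hs : 0 < s)
    (ρ ρ' : Matrix (Fin N) (Fin N) ℂ)
    (hρ : ρ.PosSemidef) (hρtr : ρ.trace = 1)
    (p : Fin s → ℝ) (hp : ∀ k, 0 < p k) (hp1 : ∑ k, p k = 1)
    (U : Fin s → Matrix (Fin N) (Fin N) ℂ)
    (hU : ∀ k, U k ∈ Matrix.unitaryGroup (Fin N) ℂ)
    (hmix : ρ' = ∑ k, p k • (U k * ρ * (U k)ᴴ))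
    (hS : vonNeumannEntropy ρ' = vonNeumannEntropy ρ) :
    (∀ k, U k * ρ * (U k)ᴴ = ρ') ∧
      ρ' = U ⟨0, hs⟩ * ρ * (U ⟨0, hs⟩)ᴴ :=
  mixture_of_unitaries_entropy_eq_general hs ρ ρ' hρ p hp hp1 U hU hmix hS
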